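/- Let σ ≥ 0 and J > √(1+σ), and define l(n) = ln n − (J²/2)(1 − 1/n²) + σ ln n for n > 0. Then l has exactly two zeros in (0,∞): n = 1 and a second zero n_ce satisfying 1 < J/√(1+σ) < n_ce. -/

import Mathlib

/-!
Dividing by `1 + σ`, the zeros of `l` are those of `g(n) = ln n - (m²/2)(1 - 1/n²)` with
`m = J/√(1+σ) > 1`. Since `g'(n) = (n² - m²)/n³`, `g` decreases strictly on `(0, m]` and increases
strictly on `[m, ∞)`. It vanishes at `1 < m`, so `g(m) < 0`, and `g → ∞`; hence `g` has exactly one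
more zero, and it lies beyond `m`.
-/

open Real Set Filter

noncomputable def logGap (m n : ℝ) : ℝ := Real.log n - m ^ 2 / 2 * (1 - (n ^ 2)⁻¹)

section logGap

variable {m n : ℝ}

@[simp]
theorem logGap_one (m : ℝ) : logGap m 1 = 0 := by simp [logGap]

theorem hasDerivAt_logGap (m : ℝ) (hn : 0 < n) :
    HasDerivAt (logGap m) ((n ^ 2 - m ^ 2) / n ^ 3) n := by
  have hpow : HasDerivAt (fun x : ℝ => x ^ 2) (2 * n) n := by simpa using hasDerivAt_pow 2 n
  have hsq : HasDerivAt (fun x : ℝ => (x ^ 2)⁻¹) (-(2 * n) / (n ^ 2) ^ 2) n :=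
    hpow.inv (by positivity)
  refine ((Real.hasDerivAt_log hn.ne').sub ((hsq.const_sub 1).const_mul (m ^ 2 / 2))).congr_deriv
    ?_
  field_simp

theorem continuousOn_logGap (m : ℝ) : ContinuousOn (logGap m) (Ioi 0) :=
  fun _ hn => (hasDerivAt_logGap m hn).continuousAt.continuousWithinAt

theorem strictAntiOn_logGap_Ioc (m : ℝ) : StrictAntiOn (logGap m) (Ioc 0 m) := by
  refine strictAntiOn_of_deriv_neg (convex_Ioc 0 m)
    ((continuousOn_logGap m).mono Ioc_subset_Ioi_self) fun n hn => ?_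
  rw [interior_Ioc] at hn
  rw [(hasDerivAt_logGap m hn.1).deriv]
  have : n ^ 2 < m ^ 2 := pow_lt_pow_left₀ hn.2 hn.1.le two_ne_zero
  exact div_neg_of_neg_of_pos (by linarith) (pow_pos hn.1 3)

theorem strictMonoOn_logGap_Ici (hm : 0 < m) : StrictMonoOn (logGap m) (Ici m) := by
  refine strictMonoOn_of_deriv_pos (convex_Ici m)
    ((continuousOn_logGap m).mono (Ici_subset_Ioi.mpr hm)) fun n hn => ?_
  rw [interior_Ici] at hn
  have hn0 : 0 < n := hm.trans hn
  rw [(hasDerivAt_logGap m hn0).deriv]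
  have : m ^ 2 < n ^ 2 := pow_lt_pow_left₀ hn hm.le two_ne_zero
  exact div_pos (by linarith) (pow_pos hn0 3)

theorem tendsto_logGap_atTop (m : ℝ) : Tendsto (logGap m) atTop atTop := by
  have hinv : Tendsto (fun n : ℝ => (n ^ 2)⁻¹) atTop (nhds 0) :=
    tendsto_inv_atTop_zero.comp (tendsto_pow_atTop two_ne_zero)
  have hrest : Tendsto (fun n : ℝ => -(m ^ 2 / 2 * (1 - (n ^ 2)⁻¹))) atTop
      (nhds (-(m ^ 2 / 2 * (1 - 0)))) :=
    ((hinv.const_sub 1).const_mul _).neg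
  exact (Real.tendsto_log_atTop.atTop_add hrest).congr fun n => (sub_eq_add_neg _ _).symm

theorem exists_logGap_eq_zero_gt (hm : 1 < m) : ∃ c, m < c ∧ logGap m c = 0 := by
  have hm0 : 0 < m := one_pos.trans hm
  have hneg : logGap m m < 0 := by
    simpa using strictAntiOn_logGap_Ioc m ⟨one_pos, hm.le⟩ ⟨hm0, le_rfl⟩ hm
  obtain ⟨T, hpos, hmT⟩ :=
    ((tendsto_logGap_atTop m).eventually_gt_atTop 0 |>.and (eventually_ge_atTop m)).exists
  obtain ⟨c, hc, hgc⟩ := intermediate_value_Ioo hmT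
    ((continuousOn_logGap m).mono fun x hx => hm0.trans_le hx.1) ⟨hneg, hpos⟩
  exact ⟨c, hc.1, hgc⟩

theorem eq_one_or_eq_of_logGap_eq_zero (hm : 1 < m) {c : ℝ} (hc : m < c) (hgc : logGap m c = 0)
    (hn : 0 < n) (hgn : logGap m n = 0) : n = 1 ∨ n = c := by
  rcases le_or_gt n m with hnm | hmn
  · exact Or.inl <| strictAntiOn_logGap_Ioc m |>.injOn ⟨hn, hnm⟩ ⟨one_pos, hm.le⟩ (by simp [hgn])
  · exact Or.inr <| strictMonoOn_logGap_Ici (one_pos.trans hm) |>.injOn hmn.le hc.le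
      (hgn.trans hgc.symm)

end logGap

theorem stmt_5 (σ J : ℝ) (hσ : 0 ≤ σ) (hJ : Real.sqrt (1 + σ) < J)
    (l : ℝ → ℝ)
    (hl : ∀ n : ℝ, 0 < n →
      l n = Real.log n - J ^ 2 / 2 * (1 - 1 / n ^ 2) + σ * Real.log n) :
    ∃ nce : ℝ, 1 < J / Real.sqrt (1 + σ) ∧ J / Real.sqrt (1 + σ) < nce ∧
      l 1 = 0 ∧ l nce = 0 ∧
      ∀ n : ℝ, 0 < n → l n = 0 → n = 1 ∨ n = nce := by
  have ha : 0 < 1 + σ := by linarith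
  have hsqrt : 0 < Real.sqrt (1 + σ) := Real.sqrt_pos.mpr ha
  set m := J / Real.sqrt (1 + σ)
  have hm : 1 < m := (one_lt_div hsqrt).mpr hJ
  have hl_eq : ∀ n, 0 < n → l n = (1 + σ) * logGap m n := by
    intro n hn
    rw [hl n hn, logGap, div_pow, Real.sq_sqrt ha.le]
    field_simp
    ring
  have hl_zero : ∀ n, 0 < n → (l n = 0 ↔ logGap m n = 0) := fun n hn => by
    rw [hl_eq n hn, mul_eq_zero_iff_left ha.ne']
  obtain ⟨c, hmc, hgc⟩ := exists_logGap_eq_zero_gt hm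
  have hc : 0 < c := one_pos.trans (hm.trans hmc)
  refine ⟨c, hm, hmc, (hl_zero 1 one_pos).mpr (logGap_one m), (hl_zero c hc).mpr hgc,
    fun n hn hln => eq_one_or_eq_of_logGap_eq_zero hm hmc hgc hn ((hl_zero n hn).mp hln)⟩
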